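/- Let G be a connected graph and H a spanning subgraph with connected components H_1, ..., H_k, each an induced subgraph of G, ordered so that χ(H_i) ≥ χ(H_{i+1}). If the complement of H in G (the spanning subgraph with edge set E(G)-E(H)) is the complete k-partite graph with parts V(H_1), ..., V(H_k), then χ_G(H) = χ(H_1) + χ(H_2). -/
import Mathlib


open SimpleGraph

attribute [local instance] Classical.propDecidable

variable {V : Type*}

/-- `f` is a proper coloring of `H`. -/
def IsProperColoring (H : SimpleGraph V) (f : V → ℕ) : Prop :=
  ∀ u v, H.Adj u v → f u ≠ f v

/-- `f` and `g` are compatible colorings of the spanning subgraph `H` with respect to `G`: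
both are proper colorings of `H` and for every edge of `G` not in `H`, `f u ≠ g v`. -/
def CompatiblePair (G H : SimpleGraph V) (f g : V → ℕ) : Prop :=
  IsProperColoring H f ∧ IsProperColoring H g ∧
    ∀ u v, G.Adj u v → ¬ H.Adj u v → f u ≠ g v

/-- The chromatic number of `H` with respect to `G`: the least `n` such that `H` admits a
pair of compatible colorings with colors `{0, …, n-1}`. -/
noncomputable def relChrom (G H : SimpleGraph V) : ℕ :=
  sInf {n | ∃ f g : V → ℕ, (∀ v, f v < n) ∧ (∀ v, g v < n) ∧ CompatiblePair G H f g}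

/-- The (ordinary) chromatic number of a graph, as a natural number. -/
noncomputable def chrom (G : SimpleGraph V) : ℕ := sInf {n | G.Colorable n}

/-- The Seidel switch `H_X` of a spanning subgraph `H` of `G` at a set `X` of vertices. -/
def seidelSwitch (G H : SimpleGraph V) (X : Set V) : SimpleGraph V :=
  SimpleGraph.fromRel fun u v =>
    ((u ∈ X ↔ v ∈ X) ∧ H.Adj u v) ∨ (¬(u ∈ X ↔ v ∈ X) ∧ G.Adj u v ∧ ¬ H.Adj u v)

/-- The co-support of a signing `φ` of `G`: the spanning subgraph whose edges are the
edges of `G` with sign `+1` (here, where `φ` holds). -/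
def cosupport (G : SimpleGraph V) (φ : V → V → Prop) : SimpleGraph V :=
  SimpleGraph.fromRel fun u v => G.Adj u v ∧ φ u v

/-- Switching of a signing at a vertex set `X`: the sign of an edge is reversed exactly
when the edge has exactly one endpoint in `X` (`True` plays the role of `+1`). -/
def switchSign (φ : V → V → Prop) (X : Set V) : V → V → Prop :=
  fun u v => φ u v ↔ (u ∈ X ↔ v ∈ X)

/-- The double covering `G^φ` of `G` determined by a signing `φ` (with `true ↔ +1`;
second coordinates agree along an edge iff the edge has sign `+1`). -/
def doubleCover (G : SimpleGraph V) (φ : V → V → Prop) : SimpleGraph (V × Bool) :=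
  SimpleGraph.fromRel fun x y => G.Adj x.1 y.1 ∧ (x.2 = y.2 ↔ φ x.1 y.1)

/-- The quotient graph `G/P` of a partition of the vertices given by the fibers of `c`. -/
def quotientGraph (G : SimpleGraph V) {ι : Type*} (c : V → ι) : SimpleGraph ι :=
  SimpleGraph.fromRel fun i j => ∃ u v : V, c u = i ∧ c v = j ∧ G.Adj u v

/-- The spanning subgraph of `G` consisting of the edges lying inside a single part of the
partition given by the fibers of `c` (the disjoint union of the induced subgraphs on parts). -/
def partsSubgraph (G : SimpleGraph V) {ι : Type*} (c : V → ι) : SimpleGraph V :=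
  SimpleGraph.fromRel fun u v => G.Adj u v ∧ c u = c v

lemma chrom_colorable' [Fintype V] (G : SimpleGraph V) : G.Colorable (chrom G) := by
  have : {n | G.Colorable n}.Nonempty := ⟨Fintype.card V, G.colorable_of_fintype⟩
  exact Nat.sInf_mem this

lemma colorable_iff_fun' (G : SimpleGraph V) (S : Set V) (n : ℕ) :
    (G.induce S).Colorable n ↔ ∃ f : V → ℕ, (∀ v ∈ S, f v < n) ∧
      ∀ u ∈ S, ∀ v ∈ S, G.Adj u v → f u ≠ f v := by
  constructor
  · rintro ⟨C⟩
    refine ⟨fun v => if h : v ∈ S then (C ⟨v, h⟩ : Fin n).val else 0, ?_, ?_⟩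
    · intro v hv; simp only [dif_pos hv]; exact (C ⟨v, hv⟩).isLt
    · intro u hu v hv hadj
      simp only [dif_pos hu, dif_pos hv]
      have := C.valid (show (G.induce S).Adj ⟨u, hu⟩ ⟨v, hv⟩ from hadj)
      exact fun h => this (Fin.ext h)
  · rintro ⟨f, hlt, hp⟩
    exact ⟨Coloring.mk (fun v => (⟨f v.1, hlt v.1 v.2⟩ : Fin n))
      (fun {u v} hadj h => hp u.1 u.2 v.1 v.2 hadj (by simpa using congrArg Fin.val h))⟩

lemma chrom_le_of_proper' [Fintype V] (G : SimpleGraph V) (S : Set V) (T : Finset ℕ) (f : V → ℕ)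
    (hmem : ∀ v ∈ S, f v ∈ T) (hp : ∀ u ∈ S, ∀ v ∈ S, G.Adj u v → f u ≠ f v) :
    chrom (G.induce S) ≤ T.card := by
  apply Nat.sInf_le
  refine (colorable_iff_fun' G S T.card).2
    ⟨fun v => if h : f v ∈ T then (T.equivFin ⟨f v, h⟩ : Fin T.card).val else 0, ?_, ?_⟩
  · intro v hv; simp only [dif_pos (hmem v hv)]; exact (T.equivFin _).isLt
  · intro u hu v hv hadj
    simp only [dif_pos (hmem u hu), dif_pos (hmem v hv)]
    intro h
    have := T.equivFin.injective (Fin.ext h)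
    exact hp u hu v hv hadj (by simpa using congrArg Subtype.val this)

lemma partsSubgraph_adj' (G : SimpleGraph V) {ι : Type*} (c : V → ι) (u v : V) :
    (partsSubgraph G c).Adj u v ↔ G.Adj u v ∧ c u = c v := by
  rw [partsSubgraph, fromRel_adj]
  constructor
  · rintro ⟨_, (h | h)⟩
    · exact h
    · exact ⟨h.1.symm, h.2.symm⟩
  · intro h; exact ⟨h.1.ne, Or.inl h⟩

lemma main_aux [Fintype V] (G : SimpleGraph V) {k : ℕ} (c : V → Fin k)
    (hcompl : ∀ u v : V, c u ≠ c v → G.Adj u v)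
    (i0 i1 : Fin k) (hne : i0 ≠ i1)
    (hba : chrom (G.induce {v | c v = i1}) ≤ chrom (G.induce {v | c v = i0}))
    (hmax : ∀ i : Fin k, i ≠ i0 →
      chrom (G.induce {v | c v = i}) ≤ chrom (G.induce {v | c v = i1})) :
    relChrom G (partsSubgraph G c) =
      chrom (G.induce {v | c v = i0}) + chrom (G.induce {v | c v = i1}) := by
  classical
  set a := chrom (G.induce {v | c v = i0}) with ha
  set b := chrom (G.induce {v | c v = i1}) with hb
  -- Upper bound construction
  have key : ∀ i : Fin k, ∃ f : V → ℕ,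
      (∀ v ∈ {v | c v = i}, f v < if i = i0 then a else b) ∧
      ∀ u ∈ {v | c v = i}, ∀ v ∈ {v | c v = i}, G.Adj u v → f u ≠ f v := by
    intro i
    by_cases h : i = i0
    · subst h
      simp only [if_pos rfl]
      exact (colorable_iff_fun' G _ a).1 (chrom_colorable' _)
    · simp only [if_neg h]
      exact (colorable_iff_fun' G _ b).1 ((chrom_colorable' _).mono (hmax i h))
  choose col hlt hp using key
  have hlt0 : ∀ v, c v = i0 → col i0 v < a := by
    intro v hv
    have := hlt i0 v hv
    simpa using this
  have hlt1 : ∀ v, c v ≠ i0 → col (c v) v < b := by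
    intro v hv
    have := hlt (c v) v rfl
    rwa [if_neg hv] at this
  set f : V → ℕ := fun v => if c v = i0 then col i0 v else (a - b) + col (c v) v with hfdef
  set g : V → ℕ := fun v =>
    if c v = i0 then (if col i0 v < a - b then col i0 v else col i0 v + b)
    else a + col (c v) v with hgdef
  have hineq : ∀ u v : V, G.Adj u v → ¬ (partsSubgraph G c).Adj u v → c u ≠ c v := by
    intro u v hG hH h
    exact hH ((partsSubgraph_adj' G c u v).2 ⟨hG, h⟩)
  have mem : a + b ∈ {n | ∃ f g : V → ℕ, (∀ v, f v < n) ∧ (∀ v, g v < n) ∧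
      CompatiblePair G (partsSubgraph G c) f g} := by
    refine ⟨f, g, ?_, ?_, ?_, ?_, ?_⟩
    · intro v
      by_cases h : c v = i0
      · simp only [hfdef, if_pos h]
        have := hlt0 v h; omega
      · simp only [hfdef, if_neg h]
        have := hlt1 v h; omega
    · intro v
      by_cases h : c v = i0
      · simp only [hgdef, if_pos h]
        have := hlt0 v h
        by_cases h2 : col i0 v < a - b <;> simp [h2] <;> omega
      · simp only [hgdef, if_neg h]
        have := hlt1 v h; omega
    · -- f proper
      intro u v hadj
      obtain ⟨hG, hcc⟩ := (partsSubgraph_adj' G c u v).1 hadj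
      by_cases h : c u = i0
      · have h' : c v = i0 := hcc ▸ h
        simp only [hfdef, if_pos h, if_pos h']
        exact hp i0 u h v h' hG
      · have h' : c v ≠ i0 := fun hh => h (hcc ▸ hh)
        simp only [hfdef, if_neg h, if_neg h']
        have := hp (c u) u rfl v hcc.symm hG
        rw [← hcc] at *
        intro heq
        exact this (by omega)
    · -- g proper
      intro u v hadj
      obtain ⟨hG, hcc⟩ := (partsSubgraph_adj' G c u v).1 hadj
      by_cases h : c u = i0
      · have h' : c v = i0 := hcc ▸ h
        simp only [hgdef, if_pos h, if_pos h']
        have hne' := hp i0 u h v h' hG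
        by_cases h1 : col i0 u < a - b <;> by_cases h2 : col i0 v < a - b <;>
          simp [h1, h2] <;> omega
      · have h' : c v ≠ i0 := fun hh => h (hcc ▸ hh)
        simp only [hgdef, if_neg h, if_neg h']
        have := hp (c u) u rfl v hcc.symm hG
        rw [← hcc] at *
        intro heq
        exact this (by omega)
    · -- cross condition
      intro u v hG hH
      have hcc := hineq u v hG hH
      by_cases h : c u = i0
      · have h' : c v ≠ i0 := fun hh => hcc (h.trans hh.symm)
        simp only [hfdef, hgdef, if_pos h, if_neg h']
        have := hlt0 u h
        omega
      · by_cases h' : c v = i0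
        · simp only [hfdef, hgdef, if_neg h, if_pos h']
          have h1 := hlt1 u h
          have h2 := hlt0 v h'
          by_cases h3 : col i0 v < a - b <;> simp [h3] <;> omega
        · simp only [hfdef, hgdef, if_neg h, if_neg h']
          have := hlt1 u h
          omega
  -- Lower bound
  have lower : ∀ n ∈ {n | ∃ f g : V → ℕ, (∀ v, f v < n) ∧ (∀ v, g v < n) ∧
      CompatiblePair G (partsSubgraph G c) f g}, a + b ≤ n := by
    rintro n ⟨f', g', hfn, hgn, hfp, hgp, hx⟩
    set F : Finset ℕ := (Finset.univ.filter (fun v => c v = i0)).image f' with hF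
    set Gs : Finset ℕ := (Finset.univ.filter (fun v => c v = i1)).image g' with hG
    have hA : a ≤ F.card := by
      refine chrom_le_of_proper' G _ F f' (fun v hv => ?_) (fun u hu v hv hadj => ?_)
      · exact Finset.mem_image_of_mem f' (Finset.mem_filter.2 ⟨Finset.mem_univ v, hv⟩)
      · exact hfp u v ((partsSubgraph_adj' G c u v).2 ⟨hadj, (hu : c u = i0).trans (hv : c v = i0).symm⟩)
    have hB : b ≤ Gs.card := by
      refine chrom_le_of_proper' G _ Gs g' (fun v hv => ?_) (fun u hu v hv hadj => ?_)
      · exact Finset.mem_image_of_mem g' (Finset.mem_filter.2 ⟨Finset.mem_univ v, hv⟩)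
      · exact hgp u v ((partsSubgraph_adj' G c u v).2 ⟨hadj, (hu : c u = i1).trans (hv : c v = i1).symm⟩)
    have hdisj : Disjoint F Gs := by
      rw [Finset.disjoint_left]
      rintro x hxF hxG
      obtain ⟨u, hu, rfl⟩ := Finset.mem_image.1 hxF
      obtain ⟨v, hv, hxv⟩ := Finset.mem_image.1 hxG
      have hu' : c u = i0 := (Finset.mem_filter.1 hu).2
      have hv' : c v = i1 := (Finset.mem_filter.1 hv).2
      have hcuv : c u ≠ c v := by rw [hu', hv']; exact hne
      refine hx u v (hcompl u v hcuv) (fun hH => hcuv ?_) hxv.symm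
      exact ((partsSubgraph_adj' G c u v).1 hH).2
    have hsub : F ∪ Gs ⊆ Finset.range n := by
      intro x hx'
      rcases Finset.mem_union.1 hx' with h | h
      · obtain ⟨u, _, rfl⟩ := Finset.mem_image.1 h
        exact Finset.mem_range.2 (hfn u)
      · obtain ⟨u, _, rfl⟩ := Finset.mem_image.1 h
        exact Finset.mem_range.2 (hgn u)
    calc a + b ≤ F.card + Gs.card := add_le_add hA hB
      _ = (F ∪ Gs).card := (Finset.card_union_of_disjoint hdisj).symm
      _ ≤ (Finset.range n).card := Finset.card_le_card hsub
      _ = n := Finset.card_range n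
  exact le_antisymm (Nat.sInf_le mem) (le_csInf ⟨_, mem⟩ lower)

/-- If `H` is the union of induced subgraphs on parts `V_0, …, V_{k-1}`, each connected,
with `χ(G[V_i])` weakly decreasing, and the complement of `H` in `G` is the complete
`k`-partite graph on these parts, then `χ_G(H) = χ(G[V_0]) + χ(G[V_1])`. -/
theorem relChrom_eq_add_of_complete_multipartite_complement [Fintype V]
    (G : SimpleGraph V) (hG : G.Connected) (k : ℕ) (hk : 2 ≤ k)
    (c : V → Fin k) (hsurj : Function.Surjective c)
    (hconn : ∀ i : Fin k, (G.induce {v | c v = i}).Connected)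
    (hcompl : ∀ u v : V, c u ≠ c v → G.Adj u v)
    (hord : ∀ i j : Fin k, i ≤ j →
      chrom (G.induce {v | c v = j}) ≤ chrom (G.induce {v | c v = i})) :
    relChrom G (partsSubgraph G c) =
      chrom (G.induce {v | c v = (⟨0, by omega⟩ : Fin k)}) +
      chrom (G.induce {v | c v = (⟨1, by omega⟩ : Fin k)}) := by
  refine main_aux G c hcompl ⟨0, by omega⟩ ⟨1, by omega⟩ ?_ ?_ ?_
  · intro h
    have := congrArg Fin.val h
    simp at this
  · exact hord _ _ (by simp [Fin.le_def])
  · intro i hi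
    refine hord ⟨1, by omega⟩ i ?_
    have : (i : ℕ) ≠ 0 := fun h => hi (Fin.ext h)
    simp only [Fin.le_def]
    omega
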